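/- arXiv:2012.01499 — 2 statements merged into one kernel-verified Lean document; each statement's English description precedes it below -/
import Mathlib

section
/- The set T = Top([N], v, θ_v) is an optimal assortment: |T| ≤ K and R(T, v) = θ_v, where θ_v is the maximum of R(S, v) over all S ⊆ [N] with |S| ≤ K. -/
/-- The expected reward `R(S, v)` of an assortment `S`. -/
noncomputable def Rew {N : ℕ} (r v : Fin N → ℝ) (S : Finset (Fin N)) : ℝ :=
  (∑ i ∈ S, r i * v i) / (1 + ∑ i ∈ S, v i)

/-- `θ_v`: the optimal expected reward over assortments of size at most `K`. -/
noncomputable def thetaOpt (N K : ℕ) (r v : Fin N → ℝ) : ℝ :=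
  ((Finset.univ : Finset (Fin N)).powerset.filter (fun S => S.card ≤ K)).sup'
    ⟨∅, by simp⟩ (Rew r v)

/- `Top([N], w, θ)`: take the `min {K, N}` items `i` with the largest values
`(r i − θ) * w i` (ties broken in favor of smaller index), then remove all items
with `r i − θ ≤ 0`. -/
open Classical in
noncomputable def TopSet (N K : ℕ) (r w : Fin N → ℝ) (θ : ℝ) : Finset (Fin N) :=
  ((List.insertionSort (fun i j =>
      (r j - θ) * w j < (r i - θ) * w i ∨
      ((r i - θ) * w i = (r j - θ) * w j ∧ i ≤ j)) (List.finRange N)).take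
    (min K N)).toFinset.filter (fun i => θ < r i)

/-!
Multiplying out the denominator, `R(S, v) ≤ θ` is equivalent to `∑ i ∈ S, (r i - θ) v i ≤ θ`,
with equality on both sides simultaneously. For `θ = θ_v` the linear objective
`∑ i ∈ S, (r i - θ) v i` is therefore at most `θ` on every `S` with `|S| ≤ K`, and equals `θ` at an
optimal assortment. An exchange argument shows that the `K` items with the largest values
`(r i - θ) v i`, with the items of `r i ≤ θ` dropped, maximize this objective; so it equals `θ`
on `T`, i.e. `R(T, v) = θ`.
-/

open Finset

namespace Finset

variable {ι : Type*}

theorem sum_le_sum_of_card_le_of_forall_le {M : Type*} [AddCommMonoid M] [LinearOrder M]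
    [IsOrderedAddMonoid M] [DecidableEq ι] {A B : Finset ι} {f : ι → M} (hcard : #A ≤ #B)
    (hnonneg : ∀ b ∈ B \ A, 0 ≤ f b) (hle : ∀ a ∈ A \ B, ∀ b ∈ B \ A, f a ≤ f b) :
    ∑ i ∈ A, f i ≤ ∑ i ∈ B, f i := by
  rw [← sum_inter_add_sum_sdiff A B, ← sum_inter_add_sum_sdiff B A, inter_comm]
  refine add_le_add_right ?_ _
  have hsdiff : #(A \ B) ≤ #(B \ A) := card_sdiff_le_card_sdiff_iff.2 hcard
  rcases (B \ A).eq_empty_or_nonempty with hBA | hBA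
  · rw [hBA, card_empty, Nat.le_zero, card_eq_zero] at hsdiff
    simp [hsdiff, hBA]
  · set m := (B \ A).inf' hBA f
    calc ∑ i ∈ A \ B, f i ≤ #(A \ B) • m :=
          sum_le_card_nsmul _ _ _ fun a ha => le_inf' hBA f fun b hb => hle a ha b hb
      _ ≤ #(B \ A) • m := nsmul_le_nsmul_left (le_inf' hBA f hnonneg) hsdiff
      _ ≤ ∑ i ∈ B \ A, f i := card_nsmul_le_sum _ _ _ fun b hb => inf'_le f hb

theorem sum_filter_eq_sum_posPart {G : Type*} [Lattice G] [AddCommGroup G] {s : Finset ι}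
    {p : ι → Prop} [DecidablePred p] {f : ι → G} (hpos : ∀ i ∈ s, p i → 0 ≤ f i)
    (hneg : ∀ i ∈ s, ¬p i → f i ≤ 0) :
    ∑ i ∈ s.filter p, f i = ∑ i ∈ s, (f i)⁺ := by
  rw [sum_filter]
  refine sum_congr rfl fun i hi => ?_
  split_ifs with h
  exacts [(posPart_of_nonneg (hpos i hi h)).symm, (posPart_of_nonpos (hneg i hi h)).symm]

end Finset

theorem List.rel_of_mem_take_insertionSort {α : Type*} (R : α → α → Prop) [DecidableRel R]
    [Std.Total R] [IsTrans α R] {l : List α} {k : ℕ} {a b : α}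
    (hb : b ∈ (l.insertionSort R).take k) (ha : a ∈ l) (hak : a ∉ (l.insertionSort R).take k) :
    R b a := by
  have hmem := (perm_insertionSort R l).mem_iff.2 ha
  rw [← take_append_drop k (l.insertionSort R), mem_append] at hmem
  exact (pairwise_insertionSort R l).rel_of_mem_take_of_mem_drop hb (hmem.resolve_left hak)

theorem exists_topSet_eq_filter (N K : ℕ) (r w : Fin N → ℝ) (θ : ℝ) :
    ∃ P : Finset (Fin N), #P = min K N ∧
      (∀ b ∈ P, ∀ a ∉ P, (r a - θ) * w a ≤ (r b - θ) * w b) ∧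
      TopSet N K r w θ = P.filter (fun i => θ < r i) := by
  set g : Fin N → ℝ := fun i => (r i - θ) * w i
  -- the ranking used by `TopSet` is the lexicographic order on `(g i, i)`, with `g` reversed
  have hlex : ∀ i j, (g j < g i ∨ (g i = g j ∧ i ≤ j)) ↔
      toLex (OrderDual.toDual (g i), i) ≤ toLex (OrderDual.toDual (g j), j) := fun i j => by
    simp [Prod.Lex.toLex_le_toLex]
  set R : Fin N → Fin N → Prop := fun i j => g j < g i ∨ (g i = g j ∧ i ≤ j)
  have : Std.Total R := ⟨fun i j => by simpa only [R, hlex] using le_total _ _⟩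
  have : IsTrans (Fin N) R := ⟨fun i j k hij hjk => by
    simp only [R, hlex] at hij hjk ⊢
    exact hij.trans hjk⟩
  set L := List.insertionSort R (List.finRange N)
  have hnodup : (L.take (min K N)).Nodup :=
    ((List.perm_insertionSort R _).nodup_iff.2 (List.nodup_finRange N)).sublist
      (List.take_sublist _ _)
  refine ⟨(L.take (min K N)).toFinset, ?_, fun b hb a ha => ?_, rfl⟩
  · rw [List.toFinset_card_of_nodup hnodup, List.length_take,
      (List.perm_insertionSort R _).length_eq, List.length_finRange]
    exact min_eq_left (min_le_right _ _)
  · rw [List.mem_toFinset] at hb ha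
    rcases List.rel_of_mem_take_insertionSort R hb (List.mem_finRange a) ha with h | h
    exacts [h.le, h.1.ge]

section Assortment

variable {N K : ℕ} {r w : Fin N → ℝ} {θ : ℝ}

theorem card_topSet_le : #(TopSet N K r w θ) ≤ K := by
  obtain ⟨P, hPcard, -, hT⟩ := exists_topSet_eq_filter N K r w θ
  rw [hT]
  exact (card_filter_le _ _).trans (hPcard.trans_le (min_le_left _ _))

theorem sum_le_sum_topSet (hw : ∀ i, 0 ≤ w i) {S : Finset (Fin N)} (hS : #S ≤ K) :
    ∑ i ∈ S, (r i - θ) * w i ≤ ∑ i ∈ TopSet N K r w θ, (r i - θ) * w i := by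
  obtain ⟨P, hPcard, hPtop, hT⟩ := exists_topSet_eq_filter N K r w θ
  have hSP : #S ≤ #P := hPcard ▸ le_min hS ((card_le_univ S).trans_eq (Fintype.card_fin N))
  rw [hT, sum_filter_eq_sum_posPart (fun i _ hi => mul_nonneg (sub_pos.2 hi).le (hw i))
    (fun i _ hi => mul_nonpos_of_nonpos_of_nonneg (sub_nonpos.2 (not_lt.1 hi)) (hw i))]
  calc ∑ i ∈ S, (r i - θ) * w i ≤ ∑ i ∈ S, ((r i - θ) * w i)⁺ := sum_le_sum fun i _ => le_posPart _
    _ ≤ ∑ i ∈ P, ((r i - θ) * w i)⁺ :=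
      sum_le_sum_of_card_le_of_forall_le hSP (fun _ _ => posPart_nonneg _)
        fun a ha b hb => posPart_mono (hPtop b (sdiff_subset hb) a (mem_sdiff.1 ha).2)

theorem sum_sub_mul_eq (S : Finset (Fin N)) :
    ∑ i ∈ S, (r i - θ) * w i - θ = ∑ i ∈ S, r i * w i - θ * (1 + ∑ i ∈ S, w i) := by
  rw [mul_add, mul_sum]
  simp only [sub_mul, sum_sub_distrib]
  ring

theorem one_add_sum_pos (hw : ∀ i, 0 ≤ w i) (S : Finset (Fin N)) : 0 < 1 + ∑ i ∈ S, w i :=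
  add_pos_of_pos_of_nonneg one_pos (sum_nonneg fun i _ => hw i)

theorem rew_le_iff (hw : ∀ i, 0 ≤ w i) {S : Finset (Fin N)} :
    Rew r w S ≤ θ ↔ ∑ i ∈ S, (r i - θ) * w i ≤ θ := by
  rw [Rew, div_le_iff₀ (one_add_sum_pos hw S), ← sub_nonpos, ← sum_sub_mul_eq, sub_nonpos]

theorem rew_eq_iff (hw : ∀ i, 0 ≤ w i) {S : Finset (Fin N)} :
    Rew r w S = θ ↔ ∑ i ∈ S, (r i - θ) * w i = θ := by
  rw [Rew, div_eq_iff (one_add_sum_pos hw S).ne', ← sub_eq_zero, ← sum_sub_mul_eq, sub_eq_zero]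

end Assortment

theorem rew_le_thetaOpt {N K : ℕ} {r v : Fin N → ℝ} {S : Finset (Fin N)} (hS : #S ≤ K) :
    Rew r v S ≤ thetaOpt N K r v :=
  le_sup' _ (by simp [hS])

theorem exists_rew_eq_thetaOpt (N K : ℕ) (r v : Fin N → ℝ) :
    ∃ S : Finset (Fin N), #S ≤ K ∧ Rew r v S = thetaOpt N K r v := by
  unfold thetaOpt
  obtain ⟨S, hS, hSθ⟩ := exists_mem_eq_sup' (s := univ.powerset.filter (#· ≤ K)) ⟨∅, by simp⟩
    (Rew r v)
  exact ⟨S, (mem_filter.1 hS).2, hSθ.symm⟩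

theorem stmt3_general (N K : ℕ) (r v : Fin N → ℝ)
    (hv : ∀ i, 0 ≤ v i ∧ v i ≤ 1) :
    (TopSet N K r v (thetaOpt N K r v)).card ≤ K ∧
      Rew r v (TopSet N K r v (thetaOpt N K r v)) = thetaOpt N K r v := by
  have hv₀ i : 0 ≤ v i := (hv i).1
  set θ := thetaOpt N K r v
  obtain ⟨S, hSK, hSθ⟩ := exists_rew_eq_thetaOpt N K r v
  refine ⟨card_topSet_le, (rew_eq_iff hv₀).2 (le_antisymm ?_ ?_)⟩
  · exact (rew_le_iff hv₀).1 (rew_le_thetaOpt card_topSet_le)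
  · calc θ = ∑ i ∈ S, (r i - θ) * v i := ((rew_eq_iff hv₀).1 hSθ).symm
      _ ≤ _ := sum_le_sum_topSet hv₀ hSK

/-- `T = Top([N], v, θ_v)` is an optimal assortment: `|T| ≤ K` and `R(T, v) = θ_v`. -/
theorem stmt3 (N K : ℕ) (hK : 1 ≤ K) (hKN : K ≤ N) (r v : Fin N → ℝ)
    (hr : ∀ i, 0 < r i ∧ r i ≤ 1) (hv : ∀ i, 0 ≤ v i ∧ v i ≤ 1) :
    (TopSet N K r v (thetaOpt N K r v)).card ≤ K ∧
      Rew r v (TopSet N K r v (thetaOpt N K r v)) = thetaOpt N K r v :=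
  stmt3_general N K r v hv
end

section
/- Let a, v, b ∈ [0,1]^N with a ≼ v ≼ b componentwise, and suppose v_i > 0 for all i. Let θ_a, θ_v, θ_b be the optimal expected rewards under preference vectors a, v, b respectively, and let S_v = Top([N], v, θ_v) be the best assortment. Then for every item i ∈ S_v there exists θ ∈ [θ_a, θ_b] such that i ∈ Top([N], g^{(i)}, θ), where g^{(i)} agrees with a on all coordinates except that its i-th coordinate equals b_i. (Hence the Prune subroutine outputs a set C with S_v ⊆ C.) -/
/-!
Take `θ = θ_v`. Since `θ_u` is monotone in `u`, `θ_a ≤ θ_v ≤ θ_b`. An item `i` lies in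
`Top([N], w, θ)` iff `θ < r i` and at most `min K N` items rank at or above it when sorting by
`(r j - θ) * w j` (ties by index). Passing from `v` to `g⁽ⁱ⁾` raises the score of `i` and lowers
every other positive score, so each item ranked at or above `i` under `g⁽ⁱ⁾` already was under `v`.
-/

open Finset

theorem lt_rew_iff {N : ℕ} {r u : Fin N → ℝ} {S : Finset (Fin N)} {θ : ℝ}
    (hu : ∀ j ∈ S, 0 ≤ u j) :
    θ < Rew r u S ↔ θ < ∑ j ∈ S, (r j - θ) * u j := by
  have hden : 0 < 1 + ∑ j ∈ S, u j := by linarith [sum_nonneg hu]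
  have hsum : ∑ j ∈ S, (r j - θ) * u j = ∑ j ∈ S, r j * u j - θ * ∑ j ∈ S, u j := by
    rw [mul_sum, ← sum_sub_distrib]
    exact sum_congr rfl fun j _ => by ring
  rw [Rew, lt_div_iff₀ hden, hsum]
  constructor <;> intro h <;> linarith

theorem thetaOpt_mono {N K : ℕ} {r u w : Fin N → ℝ} (hu : ∀ j, 0 ≤ u j)
    (huw : ∀ j, u j ≤ w j) : thetaOpt N K r u ≤ thetaOpt N K r w := by
  refine sup'_le _ _ fun S hS => ?_
  set θ := thetaOpt N K r w
  by_contra! hlt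
  -- Keeping only the items with `θ < r j` and raising `u` to `w` both increase `∑ (r j - θ) * _`.
  have hθT : θ < Rew r w {j ∈ S | θ < r j} := by
    rw [lt_rew_iff fun j _ => (hu j).trans (huw j), sum_filter]
    calc θ < ∑ j ∈ S, (r j - θ) * u j := (lt_rew_iff fun j _ => hu j).1 hlt
      _ ≤ ∑ j ∈ S, if θ < r j then (r j - θ) * w j else 0 := by
        gcongr with j
        split_ifs with hj
        · exact mul_le_mul_of_nonneg_left (huw j) (sub_nonneg.2 hj.le)
        · exact mul_nonpos_of_nonpos_of_nonneg (by linarith) (hu j)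
  exact hθT.not_ge (rew_le_thetaOpt ((card_filter_le _ _).trans (mem_filter.1 hS).2))

theorem List.Pairwise.countP_rel_eq_idxOf_add_one {α : Type*} {rel : α → α → Prop}
    [DecidableRel rel] [Std.Refl rel] [Std.Antisymm rel] [DecidableEq α] {L : List α}
    (hL : L.Pairwise rel) (hnd : L.Nodup) {i : α} (hi : i ∈ L) :
    L.countP (rel · i) = L.idxOf i + 1 := by
  induction L with
  | nil => simp at hi
  | cons x T ih =>
    rw [List.pairwise_cons] at hL
    rw [List.nodup_cons] at hnd
    rcases List.mem_cons.mp hi with rfl | hiT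
    · have : T.countP (rel · i) = 0 :=
        List.countP_eq_zero.2 fun j hj hji =>
          hnd.1 (antisymm (of_decide_eq_true hji) (hL.1 j hj) ▸ hj)
      simp [this, refl_of rel]
    · have hxi : x ≠ i := fun h => hnd.1 (h ▸ hiT)
      simp [hL.1 i hiT, ih hL.2 hnd.2 hiT, List.idxOf_cons_ne _ hxi]

theorem List.Pairwise.mem_take_iff_countP_le {α : Type*} {rel : α → α → Prop}
    [DecidableRel rel] [Std.Refl rel] [Std.Antisymm rel] {L : List α}
    (hL : L.Pairwise rel) (hnd : L.Nodup) {i : α} (hi : i ∈ L) (m : ℕ) :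
    i ∈ L.take m ↔ L.countP (rel · i) ≤ m := by
  classical
  rw [List.mem_take_iff_idxOf_lt hi, hL.countP_rel_eq_idxOf_add_one hnd hi]
  omega

section Ranking

variable {ι α : Type*} [LinearOrder ι] [LinearOrder α] (f : ι → α)

def rankLE (x y : ι) : Prop := f y < f x ∨ f x = f y ∧ x ≤ y

instance : DecidableRel (rankLE f) := fun _ _ => instDecidableOr

theorem rankLE_iff_toLex_le {x y : ι} :
    rankLE f x y ↔ toLex (OrderDual.toDual (f x), x) ≤ toLex (OrderDual.toDual (f y), y) := by
  simp [rankLE, Prod.Lex.toLex_le_toLex]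

instance : Std.Total (rankLE f) where
  total x y := by simpa only [rankLE_iff_toLex_le] using le_total _ _

instance : IsTrans ι (rankLE f) where
  trans x y z := by simpa only [rankLE_iff_toLex_le] using le_trans

instance : Std.Antisymm (rankLE f) where
  antisymm x y hxy hyx := by
    rw [rankLE_iff_toLex_le] at hxy hyx
    exact congrArg Prod.snd (toLex.injective (le_antisymm hxy hyx))

variable {f}

theorem rankLE.le {x y : ι} (h : rankLE f x y) : f y ≤ f x := by
  rcases h with h | h
  exacts [h.le, h.1.ge]

theorem rankLE.of_le {g : ι → α} {x y : ι} (h : rankLE f x y) (hx : f x ≤ g x)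
    (hy : g y ≤ f y) : rankLE g x y := by
  rcases h with h | ⟨h, hxy⟩
  · exact Or.inl (by order)
  · rcases (hy.trans (h.ge.trans hx)).lt_or_eq with h' | h'
    · exact Or.inl h'
    · exact Or.inr ⟨h'.symm, hxy⟩

end Ranking

theorem mem_topSet_iff {N K : ℕ} {r w : Fin N → ℝ} {θ : ℝ} {i : Fin N} :
    i ∈ TopSet N K r w θ ↔
      θ < r i ∧ #{j | rankLE (fun j => (r j - θ) * w j) j i} ≤ min K N := by
  set f := fun j => (r j - θ) * w j
  have hperm := List.perm_insertionSort (rankLE f) (List.finRange N)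
  have hsorted := List.pairwise_insertionSort (rankLE f) (List.finRange N)
  have hnd := hperm.nodup_iff.2 (List.nodup_finRange N)
  rw [TopSet, mem_filter, List.mem_toFinset, and_comm]
  refine and_congr_right fun _ => ?_
  convert hsorted.mem_take_iff_countP_le hnd (by simp) (min K N) using 2
  · -- `TopSet` sorts with classical decidability instances.
    congr!
  rw [hperm.countP_eq, card_def, filter_val, ← Multiset.countP_eq_card_filter, Fin.univ_def]
  rfl

theorem rankLE_of_rankLE_update {N : ℕ} {r a v : Fin N → ℝ} {θ β : ℝ} {i j : Fin N}
    (hθ : θ < r i) (hvi : 0 < v i) (hvβ : v i ≤ β) (ha : ∀ j, 0 ≤ a j) (hav : ∀ j, a j ≤ v j)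
    (h : rankLE (fun j => (r j - θ) * Function.update a i β j) j i) :
    rankLE (fun j => (r j - θ) * v j) j i := by
  obtain rfl | hji := eq_or_ne j i
  · exact refl_of _ j
  have hgi : (r i - θ) * v i ≤ (r i - θ) * Function.update a i β i := by
    rw [Function.update_self]
    exact mul_le_mul_of_nonneg_left hvβ (sub_nonneg.2 hθ.le)
  have hgj : 0 < (r j - θ) * a j := by
    have := h.le
    rw [Function.update_of_ne hji] at this
    nlinarith [mul_pos (sub_pos.2 hθ) hvi]
  refine h.of_le ?_ hgi
  rw [Function.update_of_ne hji]
  exact mul_le_mul_of_nonneg_left (hav j) (pos_of_mul_pos_left hgj (ha j)).le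

theorem stmt10_general (N K : ℕ) (r a v b : Fin N → ℝ)
    (ha : ∀ j, 0 ≤ a j ∧ a j ≤ 1) (hv : ∀ j, 0 < v j ∧ v j ≤ 1)
    (hav : ∀ j, a j ≤ v j) (hvb : ∀ j, v j ≤ b j)
    (i : Fin N) (hi : i ∈ TopSet N K r v (thetaOpt N K r v)) :
    ∃ θ, thetaOpt N K r a ≤ θ ∧ θ ≤ thetaOpt N K r b ∧
      i ∈ TopSet N K r (Function.update a i (b i)) θ := by
  refine ⟨thetaOpt N K r v, thetaOpt_mono (fun j => (ha j).1) hav,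
    thetaOpt_mono (fun j => (hv j).1.le) hvb, ?_⟩
  obtain ⟨hθi, hcard⟩ := mem_topSet_iff.1 hi
  refine mem_topSet_iff.2 ⟨hθi, (card_le_card fun j hj => ?_).trans hcard⟩
  simp only [mem_filter, mem_univ, true_and] at hj ⊢
  exact rankLE_of_rankLE_update hθi (hv i).1 (hvb i) (fun j => (ha j).1) hav hj

/-- Every item `i` of the best assortment `S_v = Top([N], v, θ_v)` survives the
Prune test: there is `θ ∈ [θ_a, θ_b]` with `i ∈ Top([N], g⁽ⁱ⁾, θ)`, where
`g⁽ⁱ⁾` agrees with `a` except that its `i`-th coordinate is `b i`. -/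
theorem stmt10 (N K : ℕ) (hK : 1 ≤ K) (hKN : K ≤ N) (r a v b : Fin N → ℝ)
    (hr : ∀ j, 0 < r j ∧ r j ≤ 1)
    (ha : ∀ j, 0 ≤ a j ∧ a j ≤ 1) (hv : ∀ j, 0 < v j ∧ v j ≤ 1)
    (hb : ∀ j, 0 ≤ b j ∧ b j ≤ 1)
    (hav : ∀ j, a j ≤ v j) (hvb : ∀ j, v j ≤ b j)
    (i : Fin N) (hi : i ∈ TopSet N K r v (thetaOpt N K r v)) :
    ∃ θ, thetaOpt N K r a ≤ θ ∧ θ ≤ thetaOpt N K r b ∧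
      i ∈ TopSet N K r (Function.update a i (b i)) θ :=
  stmt10_general N K r a v b ha hv hav hvb i hi
end
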